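/- For all 3×3 permutation matrices σ, τ₀, τ₁, every n ≥ 1 and every (i₁,…,iₙ) ∈ {0,1}ⁿ: the first row of the matrix V·G_{i₁}(σ,τ₀,τ₁)⋯G_{iₙ}(σ,τ₀,τ₁) is (1,1,1), and the two-dimensional Lebesgue measure of the barycentric subtriangle Γ_{(σ,τ₀,τ₁)}(i₁,…,iₙ) equals (1/2)^{n+1}. In particular, the area of Γ_{(σ,τ₀,τ₁)}(i₁,…,iₙ) is half the area of Γ_{(σ,τ₀,τ₁)}(i₁,…,i_{n−1}). -/

import Mathlib

/-!
`σ`, `τ₀`, `τ₁`, `G₀` and `G₁` all have column sums `1`, hence so does every product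
`M = G_{i₁} ⋯ G_{iₙ}`. As the first row of `V` is `(1, 1, 1)`, the first row of `V M` is `(1, 1, 1)`
too, and the `π`-images of the columns of `V M` are just their last two coordinates. The triangle
they span therefore has area `|det (V M)| / 2` (a `3 × 3` determinant with a row of ones is twice
a signed area), and `|det (V M)| = (1/2)ⁿ` because `det V = 1`, permutation matrices have
determinant `±1` and `|det G₀| = |det G₁| = 1/2`.
-/

open Matrix MeasureTheory Filter

noncomputable section

/-- Projection π(a,b,c) = (b/a, c/a). -/
def projPt (v : Fin 3 → ℝ) : ℝ × ℝ := (v 1 / v 0, v 2 / v 0)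

def Vmat : Matrix (Fin 3) (Fin 3) ℝ := !![1,1,1; 0,1,1; 0,0,1]

def prodSeq (C : Fin 2 → Matrix (Fin 3) (Fin 3) ℝ) (i : ℕ → Fin 2) :
    ℕ → Matrix (Fin 3) (Fin 3) ℝ
  | 0 => 1
  | n + 1 => prodSeq C i n * C (i (n + 1))

/-- The subtriangle: convex hull of the π-images of the columns of V·C_{i₁}⋯C_{iₙ}. -/
def subTri (C : Fin 2 → Matrix (Fin 3) (Fin 3) ℝ) (i : ℕ → Fin 2) (n : ℕ) :
    Set (ℝ × ℝ) :=
  convexHull ℝ (Set.range fun j : Fin 3 => projPt fun k => (Vmat * prodSeq C i n) k j)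

/-- The permutation matrix of a permutation of {0,1,2}. -/
def permMat (p : Equiv.Perm (Fin 3)) : Matrix (Fin 3) (Fin 3) ℝ :=
  Matrix.of fun i j => if p j = i then 1 else 0

def G0 : Matrix (Fin 3) (Fin 3) ℝ := !![0,0,1/2; 1,0,0; 0,1,1/2]
def G1 : Matrix (Fin 3) (Fin 3) ℝ := !![1,0,1/2; 0,1,0; 0,0,1/2]

/-- The pair of matrices G₀(σ,τ₀,τ₁) = σG₀τ₀, G₁(σ,τ₀,τ₁) = σG₁τ₁. -/
def Gtrip (σ τ0 τ1 : Matrix (Fin 3) (Fin 3) ℝ) : Fin 2 → Matrix (Fin 3) (Fin 3) ℝ :=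
  ![σ * G0 * τ0, σ * G1 * τ1]

lemma permMat_eq_permMatrix (p : Equiv.Perm (Fin 3)) : permMat p = p⁻¹.permMatrix ℝ := by
  ext i j
  simp [permMat, Equiv.Perm.permMatrix, PEquiv.toMatrix_apply, Equiv.toPEquiv_apply,
    Equiv.eq_symm_apply, eq_comm]

lemma abs_det_permMat (p : Equiv.Perm (Fin 3)) : |(permMat p).det| = 1 := by
  rw [permMat_eq_permMatrix, det_permutation]
  rcases Int.units_eq_one_or (Equiv.Perm.sign p⁻¹) with h | h <;> simp [h]

lemma permMat_mem_colStochastic (p : Equiv.Perm (Fin 3)) : permMat p ∈ colStochastic ℝ (Fin 3) :=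
  permMat_eq_permMatrix p ▸ permMatrix_mem_colStochastic

lemma G0_mem_colStochastic : G0 ∈ colStochastic ℝ (Fin 3) := by
  rw [mem_colStochastic_iff_sum]
  refine ⟨fun i j => ?_, fun j => ?_⟩
  · fin_cases i <;> fin_cases j <;> norm_num [G0]
  · fin_cases j <;> simp [G0, Fin.sum_univ_three]; norm_num

lemma G1_mem_colStochastic : G1 ∈ colStochastic ℝ (Fin 3) := by
  rw [mem_colStochastic_iff_sum]
  refine ⟨fun i j => ?_, fun j => ?_⟩
  · fin_cases i <;> fin_cases j <;> norm_num [G1]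
  · fin_cases j <;> simp [G1, Fin.sum_univ_three]; norm_num

lemma abs_det_G0 : |G0.det| = 1 / 2 := by
  simp [G0, det_fin_three]

lemma abs_det_G1 : |G1.det| = 1 / 2 := by
  simp [G1, det_fin_three]

lemma det_Vmat : Vmat.det = 1 := by
  simp [Vmat, det_fin_three]

lemma Vmat_mul_apply_zero (M : Matrix (Fin 3) (Fin 3) ℝ) : (Vmat * M) 0 = 1 ᵥ* M := by
  ext j
  simp [Vmat, mul_apply, vecMul, dotProduct, Fin.sum_univ_three]

lemma prodSeq_mem {S : Submonoid (Matrix (Fin 3) (Fin 3) ℝ)}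
    {C : Fin 2 → Matrix (Fin 3) (Fin 3) ℝ} (hC : ∀ k, C k ∈ S) (i : ℕ → Fin 2) (n : ℕ) :
    prodSeq C i n ∈ S := by
  induction n with
  | zero => exact S.one_mem
  | succ n ih => exact S.mul_mem ih (hC _)

lemma abs_det_prodSeq {C : Fin 2 → Matrix (Fin 3) (Fin 3) ℝ} {c : ℝ}
    (hC : ∀ k, |(C k).det| = c) (i : ℕ → Fin 2) (n : ℕ) :
    |(prodSeq C i n).det| = c ^ n := by
  induction n with
  | zero => simp [prodSeq]
  | succ n ih => rw [prodSeq, det_mul, abs_mul, ih, hC, pow_succ]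

lemma Gtrip_mem {S : Submonoid (Matrix (Fin 3) (Fin 3) ℝ)} {σ τ₀ τ₁ : Matrix (Fin 3) (Fin 3) ℝ}
    (hσ : σ ∈ S) (hτ₀ : τ₀ ∈ S) (hτ₁ : τ₁ ∈ S) (hG0 : G0 ∈ S) (hG1 : G1 ∈ S) (k : Fin 2) :
    Gtrip σ τ₀ τ₁ k ∈ S := by
  fin_cases k
  exacts [S.mul_mem (S.mul_mem hσ hG0) hτ₀, S.mul_mem (S.mul_mem hσ hG1) hτ₁]

lemma abs_det_Gtrip {σ τ₀ τ₁ : Matrix (Fin 3) (Fin 3) ℝ}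
    (hσ : |σ.det| = 1) (hτ₀ : |τ₀.det| = 1) (hτ₁ : |τ₁.det| = 1) (k : Fin 2) :
    |(Gtrip σ τ₀ τ₁ k).det| = 1 / 2 := by
  fin_cases k
  · simp [Gtrip, det_mul, abs_mul, hσ, hτ₀, abs_det_G0]
  · simp [Gtrip, det_mul, abs_mul, hσ, hτ₁, abs_det_G1]

open Set

lemma convexHull_stdTriangle :
    convexHull ℝ {(0, 0), (1, 0), (0, 1)} = {p : ℝ × ℝ | 0 ≤ p.1 ∧ 0 ≤ p.2 ∧ p.1 + p.2 ≤ 1} := by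
  refine Subset.antisymm (convexHull_min ?_ ?_) fun ⟨x, y⟩ ⟨hx, hy, hxy⟩ => ?_
  · simp [insert_subset_iff]
  · rintro p ⟨hp₁, hp₂, hp⟩ q ⟨hq₁, hq₂, hq⟩ s t hs ht hst
    simp only [mem_ofPred_eq, Prod.fst_add, Prod.snd_add, Prod.smul_fst, Prod.smul_snd,
      smul_eq_mul]
    refine ⟨by positivity, by positivity, by nlinarith⟩
  · have := (convex_convexHull ℝ ({(0, 0), (1, 0), (0, 1)} : Set (ℝ × ℝ))).sum_mem
      (t := Finset.univ) (w := ![1 - x - y, x, y]) (z := ![(0, 0), (1, 0), (0, 1)])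
      (fun j _ => by fin_cases j <;> simp <;> linarith)
      (by simp [Fin.sum_univ_three]; ring)
      (fun j _ => subset_convexHull ℝ _ (by fin_cases j <;> simp))
    simpa [Fin.sum_univ_three] using this

lemma volume_region_between_cc_eq_lintegral {α : Type*} [MeasurableSpace α] {μ : Measure α}
    [SFinite μ] {f g : α → ℝ} {s : Set α} (hf : Measurable f) (hg : Measurable g)
    (hs : MeasurableSet s) :
    μ.prod volume {p : α × ℝ | p.1 ∈ s ∧ p.2 ∈ Icc (f p.1) (g p.1)} =
      ∫⁻ x in s, ENNReal.ofReal (g x - f x) ∂μ := by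
  rw [Measure.prod_apply (measurableSet_region_between_cc hf hg hs), ← lintegral_indicator hs]
  congr with x
  by_cases hx : x ∈ s
  · rw [indicator_of_mem hx, ← Real.volume_Icc]
    congr with y
    simp [hx]
  · simp [hx]

lemma volume_stdTriangle :
    volume (convexHull ℝ {((0 : ℝ), (0 : ℝ)), (1, 0), (0, 1)}) = ENNReal.ofReal (1 / 2) := by
  have hT : convexHull ℝ {((0 : ℝ), (0 : ℝ)), (1, 0), (0, 1)} =
      {p : ℝ × ℝ | p.1 ∈ Icc 0 1 ∧ p.2 ∈ Icc 0 (1 - p.1)} := by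
    rw [convexHull_stdTriangle]
    ext p
    simp only [mem_ofPred_eq, mem_Icc]
    constructor
    · rintro ⟨h₁, h₂, h⟩; exact ⟨⟨h₁, by linarith⟩, h₂, by linarith⟩
    · rintro ⟨⟨h₁, -⟩, h₂, h⟩; exact ⟨h₁, h₂, by linarith⟩
  rw [hT, Measure.volume_eq_prod, volume_region_between_cc_eq_lintegral (f := fun _ => 0)
    (g := fun x => 1 - x) measurable_const (by fun_prop) measurableSet_Icc,
    ← ofReal_integral_eq_lintegral_ofReal (Continuous.integrableOn_Icc (by fun_prop))
    ((ae_restrict_iff' measurableSet_Icc).2 (ae_of_all _ fun x hx => by simpa using hx.2)),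
    integral_Icc_eq_integral_Ioc, ← intervalIntegral.integral_of_le zero_le_one]
  simp only [sub_zero]
  rw [intervalIntegral.integral_sub intervalIntegrable_const intervalIntegral.intervalIntegrable_id]
  norm_num

lemma volume_convexHull_triangle (a b c : ℝ × ℝ) :
    volume (convexHull ℝ {a, b, c}) =
      ENNReal.ofReal (|(b.1 - a.1) * (c.2 - a.2) - (c.1 - a.1) * (b.2 - a.2)| / 2) := by
  set L := toLin (Module.Basis.finTwoProd ℝ) (Module.Basis.finTwoProd ℝ)
    !![b.1 - a.1, c.1 - a.1; b.2 - a.2, c.2 - a.2] with hL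
  let f : (ℝ × ℝ) →ᵃ[ℝ] ℝ × ℝ := (AffineEquiv.constVAdd ℝ (ℝ × ℝ) a).toAffineMap.comp L.toAffineMap
  have hf : ∀ x, f x = a + L x := fun x => rfl
  have hvert : {a, b, c} = f '' {(0, 0), (1, 0), (0, 1)} := by
    simp only [image_insert_eq, image_singleton, hf, hL, toLin_finTwoProd_apply, mul_zero,
      mul_one, add_zero, zero_add, Prod.mk_zero_zero, ← Prod.mk_sub_mk, Prod.mk.eta, add_sub_cancel]
  rw [hvert, ← f.image_convexHull, show ⇑f = (a + ·) ∘ L from rfl, image_comp, image_add_left,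
    measure_preimage_add, Measure.addHaar_image_linearMap, hL, LinearMap.det_toLin,
    volume_stdTriangle, det_fin_two_of, ← ENNReal.ofReal_mul (abs_nonneg _)]
  ring_nf

lemma volume_convexHull_projPt_cols {M : Matrix (Fin 3) (Fin 3) ℝ} (h0 : ∀ j, M 0 j = 1) :
    volume (convexHull ℝ (range fun j => projPt fun k => M k j)) =
      ENNReal.ofReal (|M.det| / 2) := by
  have hcols : (range fun j => projPt fun k => M k j) =
      {(M 1 0, M 2 0), (M 1 1, M 2 1), (M 1 2, M 2 2)} := by
    ext x
    simp [projPt, h0, Fin.exists_fin_succ, eq_comm]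
  rw [hcols, volume_convexHull_triangle, det_fin_three, h0, h0, h0]
  ring_nf

theorem stmt2 (p q r : Equiv.Perm (Fin 3)) (n : ℕ) (hn : 1 ≤ n) (i : ℕ → Fin 2) :
    (∀ j : Fin 3,
      (Vmat * prodSeq (Gtrip (permMat p) (permMat q) (permMat r)) i n) 0 j = 1) ∧
    volume (subTri (Gtrip (permMat p) (permMat q) (permMat r)) i n)
      = ENNReal.ofReal ((1 / 2) ^ (n + 1)) ∧
    2 * volume (subTri (Gtrip (permMat p) (permMat q) (permMat r)) i n)
      = volume (subTri (Gtrip (permMat p) (permMat q) (permMat r)) i (n - 1)) := by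
  set C := Gtrip (permMat p) (permMat q) (permMat r)
  have hrow (m : ℕ) (j : Fin 3) : (Vmat * prodSeq C i m) 0 j = 1 := by
    have hC := Gtrip_mem (permMat_mem_colStochastic p) (permMat_mem_colStochastic q)
      (permMat_mem_colStochastic r) G0_mem_colStochastic G1_mem_colStochastic
    rw [Vmat_mul_apply_zero, one_vecMul_of_mem_colStochastic (prodSeq_mem hC i m), Pi.one_apply]
  have hvol (m : ℕ) : volume (subTri C i m) = ENNReal.ofReal ((1 / 2) ^ (m + 1)) := by
    rw [subTri, volume_convexHull_projPt_cols (hrow m), det_mul, det_Vmat, one_mul,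
      abs_det_prodSeq (abs_det_Gtrip (abs_det_permMat p) (abs_det_permMat q) (abs_det_permMat r)),
      pow_succ, div_eq_mul_one_div]
  obtain ⟨m, rfl⟩ := Nat.exists_eq_add_of_le' hn
  refine ⟨hrow _, hvol _, ?_⟩
  rw [hvol, hvol, Nat.add_sub_cancel, ← ENNReal.ofReal_ofNat 2, ← ENNReal.ofReal_mul zero_le_two]
  ring_nf
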